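/- Assume 0 < μ < μ₀ := 1/(α‖ω‖₁), I ∈ L^∞(ℝ²), and set m_α := α‖I‖_∞(1 − μ/μ₀)^{−1}. For m ≥ m_α, let a_{m,α} be the unique stationary solution of a = I + μω∗f_{m,α}(a), where f_{m,α}(s) = max(−m, min(1, αs)). Then a_{m,α} coincides with the unique stationary solution of the equation with response function f_{m_α,α}, i.e., the stationary solution is independent of m for m ≥ m_α. -/

import Mathlib

/-!
For a response function `f` that is `L`-Lipschitz with `f 0 = 0`, a bounded solution of
`a = I + μ ω ∗ f(a)` satisfies `|a| ≤ C → |a| ≤ ‖I‖_∞ + q C` with `q = μ L ‖ω‖₁ < 1`; iterating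
gives the a priori bound `‖a‖_∞ ≤ ‖I‖_∞ / (1 - q)`, and the same contraction estimate applied to
`a - b` gives uniqueness. Solutions are bounded because `f_{m,α}` is. For `f_{m,α}` the a priori
bound reads `α a ≥ -m_α ≥ -m`, where `f_{m,α}` and `f_{m_α,α}` agree; so `a_{m,α}` also solves
the equation for `m_α`, and uniqueness identifies it with `a_{m_α,α}`.
-/

open MeasureTheory Real Filter Topology
open scoped NNReal

theorem le_div_one_sub_of_le_add_mul {X : Type*} {u : X → ℝ} {A q C₀ : ℝ}
    (hq₀ : 0 ≤ q) (hq₁ : q < 1) (hC₀ : ∀ x, u x ≤ C₀)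
    (h : ∀ C, (∀ x, u x ≤ C) → ∀ x, u x ≤ A + q * C) (x : X) :
    u x ≤ A / (1 - q) := by
  set c := A / (1 - q)
  have hc : A + q * c = c := by
    simp only [c]
    field_simp [(sub_pos.mpr hq₁).ne']
    ring
  -- `c + q ^ n * (C₀ - c)` is the `n`-th iterate of `C ↦ A + q * C` started at `C₀`.
  have hiter : ∀ n : ℕ, ∀ x, u x ≤ c + q ^ n * (C₀ - c) := by
    intro n
    induction n with
    | zero => simpa using hC₀
    | succ n ih =>
      intro x
      calc u x ≤ A + q * (c + q ^ n * (C₀ - c)) := h _ ih x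
        _ = c + q ^ (n + 1) * (C₀ - c) := by linear_combination hc
  have hlim : Tendsto (fun n : ℕ => c + q ^ n * (C₀ - c)) atTop (𝓝 c) := by
    simpa using tendsto_const_nhds.add
      ((tendsto_pow_atTop_nhds_zero_of_lt_one hq₀ hq₁).mul_const (C₀ - c))
  exact ge_of_tendsto' hlim fun n => hiter n x

theorem LipschitzWith.abs_sub_le_mul {f : ℝ → ℝ} {L : ℝ≥0} (hf : LipschitzWith L f) (s t : ℝ) :
    |f s - f t| ≤ L * |s - t| := by
  simpa only [Real.dist_eq] using hf.dist_le_mul s t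

theorem LipschitzWith.abs_le_abs_map_zero_add_mul {f : ℝ → ℝ} {L : ℝ≥0}
    (hf : LipschitzWith L f) {s C : ℝ} (hs : |s| ≤ C) : |f s| ≤ |f 0| + L * C := by
  have := hf.abs_sub_le_mul s 0
  rw [sub_zero] at this
  nlinarith [abs_sub_abs_le_abs_sub (f s) (f 0), L.2]

def saturatingResponse (m α s : ℝ) : ℝ := max (-m) (min 1 (α * s))

theorem lipschitzWith_saturatingResponse (m α : ℝ) :
    LipschitzWith ‖α‖₊ (saturatingResponse m α) :=
  ((lipschitzWith_smul α).const_min 1).const_max (-m)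

theorem abs_saturatingResponse_le (m α s : ℝ) : |saturatingResponse m α s| ≤ max |m| 1 := by
  rw [saturatingResponse, abs_le]
  constructor
  · exact le_max_of_le_left (by linarith [le_abs_self m, le_max_left |m| 1])
  · exact max_le (by linarith [neg_abs_le m, le_max_left |m| 1])
      ((min_le_left _ _).trans (le_max_right _ _))

theorem saturatingResponse_zero {m : ℝ} (hm : 0 ≤ m) (α : ℝ) : saturatingResponse m α 0 = 0 := by
  rw [saturatingResponse, mul_zero, min_eq_right zero_le_one, max_eq_right (by linarith)]

theorem saturatingResponse_eq_of_neg_le {m m' α s : ℝ} (hm' : 0 ≤ m') (hm : m' ≤ m)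
    (hs : -m' ≤ α * s) : saturatingResponse m α s = saturatingResponse m' α s := by
  have hmin : -m' ≤ min 1 (α * s) := le_min (by linarith) hs
  rw [saturatingResponse, saturatingResponse, max_eq_right hmin,
    max_eq_right ((neg_le_neg hm).trans hmin)]

section Stationary

variable {G : Type*} [AddGroup G] [MeasurableSpace G]

def IsStationarySolution (ν : Measure G) (μ : ℝ) (ω I : G → ℝ) (f : ℝ → ℝ) (a : G → ℝ) : Prop :=
  ∀ x, a x = I x + μ * ∫ y, ω (x - y) * f (a y) ∂ν

variable [MeasurableAdd G] [MeasurableNeg G] {ν : Measure G} [ν.IsAddLeftInvariant]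
  [ν.IsNegInvariant] {μ CI : ℝ} {ω I : G → ℝ} {f : ℝ → ℝ} {a b : G → ℝ}

theorem integrable_comp_sub_left_mul (hω : Integrable ω ν) {h : G → ℝ}
    (hh : AEStronglyMeasurable h ν) {D : ℝ} (hD : ∀ y, |h y| ≤ D) (x : G) :
    Integrable (fun y => ω (x - y) * h y) ν :=
  ((hω.comp_sub_left x).bdd_mul hh (c := D) (Eventually.of_forall hD)).congr
    (Eventually.of_forall fun _ => mul_comm _ _)

theorem abs_integral_comp_sub_left_mul_le (hω : Integrable ω ν) {h : G → ℝ}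
    (hh : AEStronglyMeasurable h ν) {D : ℝ} (hD : ∀ y, |h y| ≤ D) (x : G) :
    |∫ y, ω (x - y) * h y ∂ν| ≤ (∫ y, |ω y| ∂ν) * D := calc
  |∫ y, ω (x - y) * h y ∂ν| ≤ ∫ y, |ω (x - y) * h y| ∂ν := abs_integral_le_integral_abs
  _ ≤ ∫ y, |ω (x - y)| * D ∂ν := by
    refine integral_mono (integrable_comp_sub_left_mul hω hh hD x).abs
      ((hω.comp_sub_left x).abs.mul_const D) fun y => ?_
    rw [abs_mul]
    exact mul_le_mul_of_nonneg_left (hD y) (abs_nonneg _)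
  _ = (∫ y, |ω y| ∂ν) * D := by
    rw [integral_mul_const, integral_sub_left_eq_self (fun y => |ω y|) ν x]

namespace IsStationarySolution

theorem abs_le (ha : IsStationarySolution ν μ ω I f a) (hω : Integrable ω ν) (hμ : 0 ≤ μ)
    (hI : ∀ x, |I x| ≤ CI) (hfa : AEStronglyMeasurable (fun y => f (a y)) ν) {D : ℝ}
    (hD : ∀ y, |f (a y)| ≤ D) (x : G) :
    |a x| ≤ CI + μ * (∫ y, |ω y| ∂ν) * D := calc
  |a x| ≤ |I x| + |μ * ∫ y, ω (x - y) * f (a y) ∂ν| := by rw [ha x]; exact abs_add_le _ _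
  _ ≤ CI + μ * ((∫ y, |ω y| ∂ν) * D) := by
    rw [abs_mul, abs_of_nonneg hμ]
    exact add_le_add (hI x)
      (mul_le_mul_of_nonneg_left (abs_integral_comp_sub_left_mul_le hω hfa hD x) hμ)
  _ = CI + μ * (∫ y, |ω y| ∂ν) * D := by ring

theorem exists_abs_le (ha : IsStationarySolution ν μ ω I f a) (hω : Integrable ω ν)
    (hμ : 0 ≤ μ) (hI : ∀ x, |I x| ≤ CI) (hf : Measurable f) {B : ℝ} (hB : ∀ s, |f s| ≤ B)
    (hameas : Measurable a) : ∃ C, ∀ x, |a x| ≤ C :=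
  ⟨_, ha.abs_le hω hμ hI (hf.comp hameas).aestronglyMeasurable fun y => hB (a y)⟩

theorem abs_le_div_one_sub (ha : IsStationarySolution ν μ ω I f a) (hω : Integrable ω ν)
    (hμ : 0 ≤ μ) (hI : ∀ x, |I x| ≤ CI) {L : ℝ≥0} (hf : LipschitzWith L f) (hf0 : f 0 = 0)
    (hq : μ * L * (∫ y, |ω y| ∂ν) < 1) (hameas : Measurable a) (habd : ∃ C, ∀ x, |a x| ≤ C)
    (x : G) : |a x| ≤ CI / (1 - μ * L * (∫ y, |ω y| ∂ν)) := by
  obtain ⟨C₀, hC₀⟩ := habd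
  have hfa : AEStronglyMeasurable (fun y => f (a y)) ν :=
    (hf.continuous.measurable.comp hameas).aestronglyMeasurable
  have hK : 0 ≤ ∫ y, |ω y| ∂ν := integral_nonneg fun _ => abs_nonneg _
  refine le_div_one_sub_of_le_add_mul (u := fun x => |a x|) (by positivity) hq hC₀
    (fun C hC x => ?_) x
  have hfC : ∀ y, |f (a y)| ≤ L * C := fun y => by
    simpa [hf0] using hf.abs_le_abs_map_zero_add_mul (hC y)
  calc |a x| ≤ CI + μ * (∫ y, |ω y| ∂ν) * (L * C) := ha.abs_le hω hμ hI hfa hfC x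
    _ = CI + μ * L * (∫ y, |ω y| ∂ν) * C := by ring

theorem unique (ha : IsStationarySolution ν μ ω I f a) (hb : IsStationarySolution ν μ ω I f b)
    (hω : Integrable ω ν) (hμ : 0 ≤ μ) {L : ℝ≥0} (hf : LipschitzWith L f)
    (hq : μ * L * (∫ y, |ω y| ∂ν) < 1) (hameas : Measurable a) (hbmeas : Measurable b)
    (habd : ∃ C, ∀ x, |a x| ≤ C) (hbbd : ∃ C, ∀ x, |b x| ≤ C) : a = b := by
  obtain ⟨Ca, hCa⟩ := habd
  obtain ⟨Cb, hCb⟩ := hbbd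
  have hfa : AEStronglyMeasurable (fun y => f (a y)) ν :=
    (hf.continuous.measurable.comp hameas).aestronglyMeasurable
  have hfb : AEStronglyMeasurable (fun y => f (b y)) ν :=
    (hf.continuous.measurable.comp hbmeas).aestronglyMeasurable
  have hK : 0 ≤ ∫ y, |ω y| ∂ν := integral_nonneg fun _ => abs_nonneg _
  have hdiff : ∀ C, (∀ x, |a x - b x| ≤ C) → ∀ x,
      |a x - b x| ≤ 0 + μ * L * (∫ y, |ω y| ∂ν) * C := fun C hC x => by
    have hia := integrable_comp_sub_left_mul hω hfa
      (fun y => hf.abs_le_abs_map_zero_add_mul (hCa y)) x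
    have hib := integrable_comp_sub_left_mul hω hfb
      (fun y => hf.abs_le_abs_map_zero_add_mul (hCb y)) x
    have hfab : ∀ y, |f (a y) - f (b y)| ≤ L * C := fun y =>
      (hf.abs_sub_le_mul _ _).trans (mul_le_mul_of_nonneg_left (hC y) L.2)
    calc |a x - b x| = |μ * ∫ y, ω (x - y) * (f (a y) - f (b y)) ∂ν| := by
          rw [ha x, hb x, add_sub_add_left_eq_sub, ← mul_sub, ← integral_sub hia hib]
          simp only [mul_sub]
      _ ≤ μ * ((∫ y, |ω y| ∂ν) * (L * C)) := by
          rw [abs_mul, abs_of_nonneg hμ]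
          exact mul_le_mul_of_nonneg_left
            (abs_integral_comp_sub_left_mul_le hω (hfa.sub hfb) hfab x) hμ
      _ = 0 + μ * L * (∫ y, |ω y| ∂ν) * C := by ring
  funext x
  have h := le_div_one_sub_of_le_add_mul (u := fun x => |a x - b x|) (by positivity) hq
    (fun x => (abs_sub _ _).trans (add_le_add (hCa x) (hCb x))) hdiff x
  rw [zero_div] at h
  exact sub_eq_zero.mp (abs_nonpos_iff.mp h)

end IsStationarySolution

end Stationary

theorem stmt10_general (α μ CI : ℝ) (hα : 0 < α) (hμ : 0 < μ)
    (ω : ℝ × ℝ → ℝ) (hω : Integrable ω)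
    (hcontr : μ * α * (∫ x, |ω x|) < 1)
    (I : ℝ × ℝ → ℝ) (hICI : ∀ x, |I x| ≤ CI)
    (F : ℝ → ℝ → ℝ) (hF : ∀ m s, F m s = max (-m) (min 1 (α * s)))
    (m mα : ℝ) (hmα : mα = α * CI * (1 - μ * α * (∫ x, |ω x|))⁻¹) (hm : mα ≤ m)
    (a b : ℝ × ℝ → ℝ)
    (hameas : Measurable a)
    (hbmeas : Measurable b)
    (ha : ∀ x, a x = I x + μ * ∫ y, ω (x - y) * F m (a y))
    (hb : ∀ x, b x = I x + μ * ∫ y, ω (x - y) * F mα (b y)) :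
    a = b := by
  obtain rfl : F = fun m => saturatingResponse m α := funext₂ hF
  have ha : IsStationarySolution volume μ ω I (saturatingResponse m α) a := ha
  have hb : IsStationarySolution volume μ ω I (saturatingResponse mα α) b := hb
  have hL : ((‖α‖₊ : ℝ≥0) : ℝ) = α := by rw [coe_nnnorm, Real.norm_eq_abs, abs_of_pos hα]
  have hq : μ * ‖α‖₊ * ∫ x, |ω x| < 1 := by rwa [hL]
  have hmα0 : 0 ≤ mα := by
    have : 0 ≤ CI := (abs_nonneg _).trans (hICI 0)
    rw [hmα]
    exact mul_nonneg (by positivity) (inv_nonneg.mpr (by linarith))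
  have habd := ha.exists_abs_le hω hμ.le hICI
    (lipschitzWith_saturatingResponse m α).continuous.measurable
    (abs_saturatingResponse_le m α) hameas
  have hbbd := hb.exists_abs_le hω hμ.le hICI
    (lipschitzWith_saturatingResponse mα α).continuous.measurable
    (abs_saturatingResponse_le mα α) hbmeas
  have haL := ha.abs_le_div_one_sub hω hμ.le hICI (lipschitzWith_saturatingResponse m α)
    (saturatingResponse_zero (hmα0.trans hm) α) hq hameas habd
  rw [hL] at haL
  have hresp : ∀ y, saturatingResponse m α (a y) = saturatingResponse mα α (a y) := fun y => by
    refine saturatingResponse_eq_of_neg_le hmα0 hm ?_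
    rw [hmα, mul_assoc, ← div_eq_mul_inv, ← mul_neg]
    exact mul_le_mul_of_nonneg_left (neg_le_of_abs_le (haL y)) hα.le
  have ha' : IsStationarySolution volume μ ω I (saturatingResponse mα α) a := fun x => by
    simp only [ha x, hresp]
  exact ha'.unique hb hω hμ.le (lipschitzWith_saturatingResponse mα α) hq hameas hbmeas habd hbbd

/-- For `m ≥ m_α := α‖I‖_∞(1−μ/μ₀)⁻¹` the stationary solution of the Amari-type
equation with response function `f_{m,α}` is independent of `m`: it coincides with
the stationary solution for the response function `f_{m_α,α}`. -/
theorem stmt10 (α μ CI : ℝ) (hα : 0 < α) (hμ : 0 < μ)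
    (ω : ℝ × ℝ → ℝ) (hω : Integrable ω)
    (hcontr : μ * α * (∫ x, |ω x|) < 1)
    (I : ℝ × ℝ → ℝ) (hImeas : Measurable I) (hICI : ∀ x, |I x| ≤ CI)
    (F : ℝ → ℝ → ℝ) (hF : ∀ m s, F m s = max (-m) (min 1 (α * s)))
    (m mα : ℝ) (hmα : mα = α * CI * (1 - μ * α * (∫ x, |ω x|))⁻¹) (hm : mα ≤ m)
    (a b : ℝ × ℝ → ℝ)
    (hameas : Measurable a) (habd : ∃ C, ∀ x, |a x| ≤ C)
    (hbmeas : Measurable b) (hbbd : ∃ C, ∀ x, |b x| ≤ C)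
    (ha : ∀ x, a x = I x + μ * ∫ y, ω (x - y) * F m (a y))
    (hb : ∀ x, b x = I x + μ * ∫ y, ω (x - y) * F mα (b y)) :
    a = b :=
  stmt10_general α μ CI hα hμ ω hω hcontr I hICI F hF m mα hmα hm a b hameas hbmeas ha hb
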